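/- arXiv:2303.11046 — 6 statements merged into one kernel-verified Lean document; each statement's English description precedes it below -/
import Mathlib

section
/- Suppose (x,y) ∈ X×Y and μ₁, μ₂ > 0 satisfy the excessive gap condition f_{μ₂}(x) ≤ φ_{μ₁}(y), where f_{μ₂}(x) = max_{y'∈Y}(xᵀAy' − μ₂d₂(y')) and φ_{μ₁}(y) = min_{x'∈X}(x'ᵀAy + μ₁d₁(x')). Then the saddle-point error satisfies ε(x,y) = max_{y'∈Y} xᵀAy' − min_{x'∈X} x'ᵀAy ≤ μ₁D₁ + μ₂D₂. -/
open Matrix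
open scoped BigOperators

/-- Under the excessive gap condition `f_{μ₂}(x) ≤ φ_{μ₁}(y)`, the saddle-point
error satisfies `ε(x,y) = max_{y'∈Y} xᵀAy' − min_{x'∈X} x'ᵀAy ≤ μ₁D₁ + μ₂D₂`. -/
theorem stmt3 {n m : ℕ} (X : Set (Fin n → ℝ)) (Y : Set (Fin m → ℝ))
    (hXconv : Convex ℝ X) (hXcomp : IsCompact X) (hXne : X.Nonempty)
    (hYconv : Convex ℝ Y) (hYcomp : IsCompact Y) (hYne : Y.Nonempty)
    (A : Matrix (Fin n) (Fin m) ℝ)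
    (d₁ : (Fin n → ℝ) → ℝ) (hd₁cont : ContinuousOn d₁ X)
    (hd₁nonneg : ∀ x ∈ X, 0 ≤ d₁ x) (hd₁min : ∃ x ∈ X, d₁ x = 0)
    (d₂ : (Fin m → ℝ) → ℝ) (hd₂cont : ContinuousOn d₂ Y)
    (hd₂nonneg : ∀ y ∈ Y, 0 ≤ d₂ y) (hd₂min : ∃ y ∈ Y, d₂ y = 0)
    (D₁ : ℝ) (hD₁ : IsGreatest (d₁ '' X) D₁)
    (D₂ : ℝ) (hD₂ : IsGreatest (d₂ '' Y) D₂)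
    (μ₁ μ₂ : ℝ) (hμ₁ : 0 < μ₁) (hμ₂ : 0 < μ₂)
    (x : Fin n → ℝ) (hx : x ∈ X) (y : Fin m → ℝ) (hy : y ∈ Y)
    (hegc : sSup ((fun y' => x ⬝ᵥ A.mulVec y' - μ₂ * d₂ y') '' Y)
          ≤ sInf ((fun x' => x' ⬝ᵥ A.mulVec y + μ₁ * d₁ x') '' X)) :
    sSup ((fun y' => x ⬝ᵥ A.mulVec y') '' Y) - sInf ((fun x' => x' ⬝ᵥ A.mulVec y) '' X)
      ≤ μ₁ * D₁ + μ₂ * D₂ := by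
  obtain ⟨hD₁mem, hD₁ub⟩ := hD₁
  obtain ⟨hD₂mem, hD₂ub⟩ := hD₂
  have hcontg : Continuous (fun y' : Fin m → ℝ => x ⬝ᵥ A.mulVec y') := by
    simp only [dotProduct, mulVec]
    continuity
  have hconth : Continuous (fun x' : Fin n → ℝ => x' ⬝ᵥ A.mulVec y) := by
    simp only [dotProduct, mulVec]
    continuity
  have hbdd2 : BddAbove ((fun y' => x ⬝ᵥ A.mulVec y' - μ₂ * d₂ y') '' Y) :=
    (hYcomp.image_of_continuousOn
      (hcontg.continuousOn.sub (continuousOn_const.mul hd₂cont))).bddAbove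
  have h1 : sSup ((fun y' => x ⬝ᵥ A.mulVec y') '' Y)
      ≤ sSup ((fun y' => x ⬝ᵥ A.mulVec y' - μ₂ * d₂ y') '' Y) + μ₂ * D₂ := by
    apply csSup_le (hYne.image _)
    rintro v ⟨y', hy', rfl⟩
    have h₁ : x ⬝ᵥ A.mulVec y' - μ₂ * d₂ y'
        ≤ sSup ((fun y' => x ⬝ᵥ A.mulVec y' - μ₂ * d₂ y') '' Y) :=
      le_csSup hbdd2 ⟨y', hy', rfl⟩
    have h₂ : μ₂ * d₂ y' ≤ μ₂ * D₂ :=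
      mul_le_mul_of_nonneg_left (hD₂ub ⟨y', hy', rfl⟩) hμ₂.le
    simp only
    linarith
  have hbddb : BddBelow ((fun x' => x' ⬝ᵥ A.mulVec y) '' X) :=
    (hXcomp.image hconth).bddBelow
  have h2 : sInf ((fun x' => x' ⬝ᵥ A.mulVec y + μ₁ * d₁ x') '' X)
      ≤ sInf ((fun x' => x' ⬝ᵥ A.mulVec y) '' X) + μ₁ * D₁ := by
    have key : sInf ((fun x' => x' ⬝ᵥ A.mulVec y + μ₁ * d₁ x') '' X) - μ₁ * D₁
        ≤ sInf ((fun x' => x' ⬝ᵥ A.mulVec y) '' X) := by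
      apply le_csInf (hXne.image _)
      rintro v ⟨x', hx', rfl⟩
      have h₁ : sInf ((fun x' => x' ⬝ᵥ A.mulVec y + μ₁ * d₁ x') '' X)
          ≤ x' ⬝ᵥ A.mulVec y + μ₁ * d₁ x' :=
        csInf_le (hXcomp.image_of_continuousOn
          (hconth.continuousOn.add (continuousOn_const.mul hd₁cont))).bddBelow
          ⟨x', hx', rfl⟩
      have h₂ : μ₁ * d₁ x' ≤ μ₁ * D₁ :=
        mul_le_mul_of_nonneg_left (hD₁ub ⟨x', hx', rfl⟩) hμ₁.le
      simp only
      linarith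
    linarith
  linarith
end

section
/- Let Q be the strategy set of a treeplex (sequence-form polytope) with index set Σ and information sets 𝓘, let weights w_I be defined recursively by w_I = 1 + max_{a∈𝓐(I)} ∑_{I': p(I')=(I,a)} w_{I'}, and define the prox-function d(x) = x_∅ ln x_∅ + ∑_{I∈𝓘} ∑_{a∈𝓐(I)} (w_I − ∑_{I': p(I')=(I,a)} w_{I'}) x_{I,a} ln x_{I,a}. Then d is (1/M_Q)-strongly convex with respect to the L¹-norm on the relative interior of Q, where M_Q := max_{x∈Q} ‖x‖₁; i.e., for every x in ri Q and every ξ ∈ ℝ^{|Σ|}, ξᵀ ∇²d(x) ξ ≥ ‖ξ‖₁² / M_Q. -/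
open scoped BigOperators

/-- A treeplex: information sets with finite nonempty action sets and a
parent function forming a rooted tree (witnessed by a depth function). -/
structure Treeplex where
  Info : Type
  Act : Info → Type
  finInfo : Fintype Info
  decInfo : DecidableEq Info
  finAct : ∀ i, Fintype (Act i)
  decAct : ∀ i, DecidableEq (Act i)
  neAct : ∀ i, Nonempty (Act i)
  parent : Info → Option (Σ i : Info, Act i)
  depth : Info → ℕ
  parent_depth : ∀ i' i a, parent i' = some ⟨i, a⟩ → depth i < depth i'

instance (T : Treeplex) : Fintype T.Info := T.finInfo
instance (T : Treeplex) : DecidableEq T.Info := T.decInfo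
instance (T : Treeplex) (i : T.Info) : Fintype (T.Act i) := T.finAct i
instance (T : Treeplex) (i : T.Info) : DecidableEq (T.Act i) := T.decAct i
instance (T : Treeplex) (i : T.Info) : Nonempty (T.Act i) := T.neAct i

namespace Treeplex

/-- The index set Σ = {∅} ∪ {(I,a)}. -/
abbrev Idx (T : Treeplex) := Option (Σ i : T.Info, T.Act i)

/-- The strategy set (sequence-form polytope). -/
def Q (T : Treeplex) : Set (T.Idx → ℝ) :=
  {x | (∀ j, 0 ≤ x j) ∧ x none = 1 ∧
    ∀ i : T.Info, x (T.parent i) = ∑ a : T.Act i, x (some ⟨i, a⟩)}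

/-- Sum of `w` over the children information sets of the sequence `(i, a)`. -/
def childSum (T : Treeplex) (w : T.Info → ℝ) (i : T.Info) (a : T.Act i) : ℝ :=
  ∑ i' : T.Info, if T.parent i' = some ⟨i, a⟩ then w i' else 0

/-- `w` satisfies the recursion `w_I = 1 + max_{a} ∑_{I' : p(I')=(I,a)} w_{I'}`. -/
def IsWeight (T : Treeplex) (w : T.Info → ℝ) : Prop :=
  ∀ i : T.Info,
    w i = 1 + Finset.univ.sup' Finset.univ_nonempty (fun a : T.Act i => T.childSum w i a)

/-- The dilated entropy prox-function
`d(x) = x_∅ ln x_∅ + ∑_{I,a} (w_I − ∑_{p(I')=(I,a)} w_{I'}) x_{I,a} ln x_{I,a}`. -/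
noncomputable def prox (T : Treeplex) (w : T.Info → ℝ) (x : T.Idx → ℝ) : ℝ :=
  x none * Real.log (x none) +
    ∑ i : T.Info, ∑ a : T.Act i,
      (w i - T.childSum w i a) * (x (some ⟨i, a⟩) * Real.log (x (some ⟨i, a⟩)))

end Treeplex

namespace Treeplex

noncomputable def vpos (T : Treeplex) : T.Info → ℝ
  | i =>
    (match h : T.parent i with
      | none => 1
      | some ⟨i', _⟩ => vpos T i') / (Fintype.card (T.Act i) : ℝ)
termination_by i => T.depth i
decreasing_by exact T.parent_depth _ _ _ h

lemma vpos_pos (T : Treeplex) : ∀ i : T.Info, 0 < vpos T i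
  | i => by
    rw [vpos]
    apply div_pos
    · split
      · exact one_pos
      · exact vpos_pos T _
    · exact_mod_cast Fintype.card_pos
termination_by i => T.depth i
decreasing_by exact T.parent_depth _ _ _ (by assumption)

noncomputable def upos (T : Treeplex) : T.Idx → ℝ
  | none => 1
  | some ⟨i, _⟩ => vpos T i

lemma vpos_eq (T : Treeplex) (i : T.Info) :
    vpos T i = upos T (T.parent i) / (Fintype.card (T.Act i) : ℝ) := by
  rw [vpos]
  congr 1
  split
  · rename_i h; rw [h]; rfl
  · rename_i i' a h; rw [h]; rfl

lemma upos_pos (T : Treeplex) (j : T.Idx) : 0 < upos T j := by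
  cases j with
  | none => exact one_pos
  | some s => exact vpos_pos T s.1

lemma upos_mem (T : Treeplex) : upos T ∈ T.Q := by
  refine ⟨fun j => (upos_pos T j).le, rfl, fun i => ?_⟩
  have hc : (Fintype.card (T.Act i) : ℝ) ≠ 0 := by
    exact_mod_cast Fintype.card_ne_zero
  calc upos T (T.parent i) = (Fintype.card (T.Act i) : ℝ) * vpos T i := by
        rw [vpos_eq]; field_simp
    _ = ∑ _a : T.Act i, vpos T i := by
        rw [Finset.sum_const, Finset.card_univ, nsmul_eq_mul]
    _ = ∑ a : T.Act i, upos T (some ⟨i, a⟩) := rfl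

/-- Every point in the relative interior of `Q` has strictly positive coordinates. -/
lemma pos_of_mem_intrinsicInterior (T : Treeplex) {x : T.Idx → ℝ}
    (hx : x ∈ intrinsicInterior ℝ T.Q) (j : T.Idx) : 0 < x j := by
  obtain ⟨y, hy, rfl⟩ := mem_intrinsicInterior.mp hx
  have hxQ : (y : T.Idx → ℝ) ∈ T.Q := intrinsicInterior_subset hx
  have hxspan : (y : T.Idx → ℝ) ∈ affineSpan ℝ T.Q := subset_affineSpan ℝ _ hxQ
  have huspan : upos T ∈ affineSpan ℝ T.Q := subset_affineSpan ℝ _ (upos_mem T)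
  -- the curve `t ↦ x + t (x - u)` inside the affine span
  set z : ℝ → (T.Idx → ℝ) := fun t => t • ((y : T.Idx → ℝ) -ᵥ upos T) +ᵥ (y : T.Idx → ℝ)
    with hz
  have hzmem : ∀ t : ℝ, z t ∈ affineSpan ℝ T.Q := fun t =>
    AffineSubspace.smul_vsub_vadd_mem _ t hxspan huspan hxspan
  set f : ℝ → affineSpan ℝ T.Q := fun t => ⟨z t, hzmem t⟩ with hf
  have hfz : Continuous f := by
    apply Continuous.subtype_mk
    simp only [hz, vsub_eq_sub, vadd_eq_add]
    exact (continuous_id.smul continuous_const).add continuous_const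
  have hf0 : f 0 = y := by
    apply Subtype.ext
    simp [hf, hz]
  have hopen : IsOpen (f ⁻¹' interior ((↑) ⁻¹' T.Q : Set (affineSpan ℝ T.Q))) :=
    isOpen_interior.preimage hfz
  have h0mem : (0 : ℝ) ∈ f ⁻¹' interior ((↑) ⁻¹' T.Q : Set (affineSpan ℝ T.Q)) := by
    simp [hf0, hy]
  obtain ⟨ε, hε, hball⟩ := Metric.isOpen_iff.mp hopen 0 h0mem
  have htmem : f (ε / 2) ∈ interior ((↑) ⁻¹' T.Q : Set (affineSpan ℝ T.Q)) := by
    apply hball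
    simp [Real.ball_eq_Ioo]
    constructor <;> nlinarith
  have hzQ : z (ε / 2) ∈ T.Q := by
    have h2 := interior_subset htmem
    exact h2
  have hnn := hzQ.1 j
  have hupos := upos_pos T j
  simp only [hz, vsub_eq_sub, vadd_eq_add, Pi.add_apply, Pi.smul_apply, Pi.sub_apply,
    smul_eq_mul] at hnn
  nlinarith

end Treeplex


/-- The dilated entropy prox-function is `(1/M_Q)`-strongly convex w.r.t. the
`L¹`-norm on `ri Q`: for `x ∈ ri Q` and any `ξ`, the Hessian quadratic form
`ξᵀ∇²d(x)ξ = ξ_∅²/x_∅ + ∑_{I,a}(w_I − ∑ w_{I'}) ξ_{I,a}²/x_{I,a}` is at least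
`‖ξ‖₁²/M_Q`. -/
theorem stmt5 (T : Treeplex) (w : T.Info → ℝ) (hw : T.IsWeight w)
    (MQ : ℝ) (hMQ : IsGreatest ((fun x => ∑ j, |x j|) '' T.Q) MQ)
    (x : T.Idx → ℝ) (hx : x ∈ intrinsicInterior ℝ T.Q) (ξ : T.Idx → ℝ) :
    (∑ j, |ξ j|) ^ 2 / MQ ≤
      ξ none ^ 2 / x none +
        ∑ i : T.Info, ∑ a : T.Act i,
          (w i - T.childSum w i a) * (ξ (some ⟨i, a⟩) ^ 2 / x (some ⟨i, a⟩)) := by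
  have hpos : ∀ j, 0 < x j := T.pos_of_mem_intrinsicInterior hx
  have hxQ : x ∈ T.Q := intrinsicInterior_subset hx
  have hS_le : ∑ j, x j ≤ MQ := by
    have := hMQ.2 ⟨x, hxQ, rfl⟩
    simpa [abs_of_pos (hpos _)] using this
  have hSpos : 0 < ∑ j, x j := Finset.sum_pos (fun j _ => hpos j) ⟨none, Finset.mem_univ _⟩
  have hMQpos : 0 < MQ := lt_of_lt_of_le hSpos hS_le
  -- Sedrakyan / Cauchy–Schwarz
  have hCS : (∑ j, |ξ j|) ^ 2 / (∑ j, x j) ≤ ∑ j, ξ j ^ 2 / x j := by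
    have := Finset.sq_sum_div_le_sum_sq_div Finset.univ (fun j => |ξ j|)
      (fun j _ => hpos j)
    simpa [sq_abs] using this
  have h1 : (∑ j, |ξ j|) ^ 2 / MQ ≤ (∑ j, |ξ j|) ^ 2 / (∑ j, x j) :=
    div_le_div_of_nonneg_left (sq_nonneg _) hSpos hS_le
  refine le_trans (le_trans h1 hCS) ?_
  -- split the sum over `Option (Σ i, Act i)`
  rw [Fintype.sum_option, ← Finset.univ_sigma_univ, Finset.sum_sigma]
  refine add_le_add le_rfl (Finset.sum_le_sum fun i _ => Finset.sum_le_sum fun a _ => ?_)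
  · have hcoef : 1 ≤ w i - T.childSum w i a := by
      have := hw i
      have hle : T.childSum w i a ≤
          Finset.univ.sup' Finset.univ_nonempty (fun a : T.Act i => T.childSum w i a) :=
        Finset.le_sup' _ (Finset.mem_univ a)
      linarith
    have hnn : 0 ≤ ξ (some ⟨i, a⟩) ^ 2 / x (some ⟨i, a⟩) :=
      div_nonneg (sq_nonneg _) (hpos _).le
    nlinarith
end

section
/- With d, Q, w_I as above, for every x in the relative interior of Q the identity d(x) = ∑_{I∈𝓘} w_I x_{p(I)} ∑_{a∈𝓐(I)} (x_{I,a}/x_{p(I)}) ln(x_{I,a}/x_{p(I)}) holds. -/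
open scoped BigOperators

private lemma entropy_aux (b c : ℝ) (hb : 0 ≤ b) (hc : 0 < c) :
    c * ((b / c) * Real.log (b / c)) = b * Real.log b - b * Real.log c := by
  rcases eq_or_lt_of_le hb with h | h
  · simp [← h]
  · rw [Real.log_div h.ne' hc.ne']
    field_simp

/-- Alternative form of the dilated entropy prox-function on `ri Q`:
`d(x) = ∑_I w_I x_{p(I)} ∑_a (x_{I,a}/x_{p(I)}) ln (x_{I,a}/x_{p(I)})`. -/
theorem stmt6 (T : Treeplex) (w : T.Info → ℝ) (hw : T.IsWeight w)
    (x : T.Idx → ℝ) (hx : x ∈ intrinsicInterior ℝ T.Q) :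
    T.prox w x =
      ∑ i : T.Info, w i * x (T.parent i) *
        ∑ a : T.Act i,
          (x (some ⟨i, a⟩) / x (T.parent i)) *
            Real.log (x (some ⟨i, a⟩) / x (T.parent i)) := by

  have hxQ : x ∈ T.Q := intrinsicInterior_subset hx
  obtain ⟨hpos, hroot, hsum⟩ := hxQ
  set L : T.Idx → ℝ := fun j => x j * Real.log (x j) with hL
  -- per-information-set identity
  have key : ∀ i : T.Info,
      x (T.parent i) * ∑ a : T.Act i,
        (x (some ⟨i, a⟩) / x (T.parent i)) *
          Real.log (x (some ⟨i, a⟩) / x (T.parent i))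
      = (∑ a : T.Act i, L (some ⟨i, a⟩)) - L (T.parent i) := by
    intro i
    have hp : x (T.parent i) = ∑ a : T.Act i, x (some ⟨i, a⟩) := hsum i
    rcases eq_or_lt_of_le (hpos (T.parent i)) with h0 | h0
    · have hall : ∀ a : T.Act i, x (some ⟨i, a⟩) = 0 := by
        intro a
        have h1 : ∑ a : T.Act i, x (some ⟨i, a⟩) = 0 := by rw [← hp, ← h0]
        have := (Finset.sum_eq_zero_iff_of_nonneg
          (fun a _ => hpos (some ⟨i, a⟩))).mp h1
        exact this a (Finset.mem_univ a)
      simp [hL, ← h0, hall]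
    · rw [Finset.mul_sum]
      have : ∀ a : T.Act i,
          x (T.parent i) * ((x (some ⟨i, a⟩) / x (T.parent i)) *
            Real.log (x (some ⟨i, a⟩) / x (T.parent i)))
          = x (some ⟨i, a⟩) * Real.log (x (some ⟨i, a⟩))
            - x (some ⟨i, a⟩) * Real.log (x (T.parent i)) :=
        fun a => entropy_aux _ _ (hpos _) h0
      rw [Finset.sum_congr rfl (fun a _ => this a), Finset.sum_sub_distrib,
        ← Finset.sum_mul, ← hp, hL]
  -- regroup the parent terms
  have regroup : ∑ i : T.Info, w i * L (T.parent i)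
      = ∑ i : T.Info, ∑ a : T.Act i, T.childSum w i a * L (some ⟨i, a⟩) := by
    have hLnone : L none = 0 := by simp [hL, hroot]
    rw [Finset.sum_sigma' Finset.univ (fun i => (Finset.univ : Finset (T.Act i)))
      (fun i a => T.childSum w i a * L (some ⟨i, a⟩))]
    simp only [Treeplex.childSum, Finset.sum_mul, ite_mul, zero_mul]
    rw [Finset.sum_comm]
    refine Finset.sum_congr rfl (fun i' _ => ?_)
    rcases h : T.parent i' with _ | s0
    · simp [hLnone, h]
    · rw [Finset.sum_eq_single s0]
      · simp
      · intro s _ hs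
        have he : (⟨s.fst, s.snd⟩ : Σ i : T.Info, T.Act i) = s := Sigma.eta s
        rw [he, if_neg (fun h' => hs (Option.some_injective _ h').symm)]
      · intro h'
        exact absurd (by simp : s0 ∈ Finset.univ.sigma fun _ => Finset.univ) h'
  -- put it together
  have hRHS : ∀ i : T.Info,
      w i * x (T.parent i) *
        ∑ a : T.Act i,
          (x (some ⟨i, a⟩) / x (T.parent i)) *
            Real.log (x (some ⟨i, a⟩) / x (T.parent i))
      = (∑ a : T.Act i, w i * L (some ⟨i, a⟩)) - w i * L (T.parent i) := by
    intro i
    rw [mul_assoc, key i, mul_sub, Finset.mul_sum]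
  rw [Finset.sum_congr rfl (fun i _ => hRHS i), Finset.sum_sub_distrib, regroup,
    ← Finset.sum_sub_distrib]
  simp only [← Finset.sum_sub_distrib, ← sub_mul]
  unfold Treeplex.prox
  rw [hroot]
  simp [hL]
end

section
/- With d, Q, w_I as above, and γ_I defined recursively by γ_I = |𝓐(I)| + ∑_{a∈𝓐(I)} ∑_{I': p(I')=(I,a)} γ_{I'}, the recursively-defined optimal values opt_I = w_I ln( ∑_{a∈𝓐(I)} exp( (∑_{I': p(I')=(I,a)} opt_{I'})/w_I ) ) satisfy opt_I ≤ w_I ln γ_I for every information set I. -/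
open scoped BigOperators

/-!
By induction from the leaves. If `opt_{I'} ≤ w_{I'} ln γ_{I'}` for the children `I'` of `(I, a)`,
then, since `γ_{I'} ≤ S_a := ∑_{p(I')=(I,a)} γ_{I'}` and the children's weights add up to at most
`w_I - 1`, the exponent satisfies `(∑ opt_{I'}) / w_I ≤ ln (1 + S_a)`. Summing `exp` over the actions
gives at most `|𝓐(I)| + ∑_a S_a = γ_I`.
-/

namespace Treeplex

variable (T : Treeplex)

theorem induction_on_children {P : T.Info → Prop}
    (h : ∀ i, (∀ i' (a : T.Act i), T.parent i' = some ⟨i, a⟩ → P i') → P i) (i : T.Info) :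
    P i := by
  induction i using (measure fun i => Finset.univ.sup T.depth - T.depth i).wf.induction with
  | h i ih =>
    refine h i fun i' a hp => ih i' ?_
    have hlt := T.parent_depth i' i a hp
    have hle : T.depth i' ≤ Finset.univ.sup T.depth := Finset.le_sup (Finset.mem_univ i')
    show Finset.univ.sup T.depth - T.depth i' < Finset.univ.sup T.depth - T.depth i
    omega

variable {T} {i : T.Info} {a : T.Act i}

theorem childSum_le_childSum {f g : T.Info → ℝ}
    (h : ∀ i', T.parent i' = some ⟨i, a⟩ → f i' ≤ g i') : T.childSum f i a ≤ T.childSum g i a :=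
  Finset.sum_le_sum fun i' _ => by split_ifs with hp <;> simp [h i', hp]

theorem childSum_nonneg {f : T.Info → ℝ} (h : ∀ i', T.parent i' = some ⟨i, a⟩ → 0 ≤ f i') :
    0 ≤ T.childSum f i a :=
  Finset.sum_nonneg fun i' _ => by split_ifs with hp <;> simp [h i', hp]

theorem le_childSum {f : T.Info → ℝ} (h : ∀ i', T.parent i' = some ⟨i, a⟩ → 0 ≤ f i')
    {i' : T.Info} (hi' : T.parent i' = some ⟨i, a⟩) : f i' ≤ T.childSum f i a := by
  have := Finset.single_le_sum (f := fun j => if T.parent j = some ⟨i, a⟩ then f j else 0)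
    (fun j _ => by split_ifs with hp <;> simp [h j, hp]) (Finset.mem_univ i')
  simpa [childSum, hi'] using this

theorem childSum_mul_const (f : T.Info → ℝ) (c : ℝ) :
    T.childSum (fun i' => f i' * c) i a = T.childSum f i a * c := by
  simp only [childSum, Finset.sum_mul, ite_mul, zero_mul]

theorem IsWeight.childSum_le {w : T.Info → ℝ} (hw : T.IsWeight w) (i : T.Info) (a : T.Act i) :
    T.childSum w i a ≤ w i - 1 := by
  have := Finset.le_sup' (fun a : T.Act i => T.childSum w i a) (Finset.mem_univ a)
  linarith [hw i]

theorem IsWeight.one_le {w : T.Info → ℝ} (hw : T.IsWeight w) (i : T.Info) : 1 ≤ w i := by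
  induction i using T.induction_on_children with
  | h i ih =>
    obtain ⟨a⟩ := T.neAct i
    have := Finset.le_sup' (fun a : T.Act i => T.childSum w i a) (Finset.mem_univ a)
    have := childSum_nonneg fun i' hp => zero_le_one.trans (ih i' a hp)
    linarith [hw i]

theorem one_le_of_eq_card_add_childSum {γ : T.Info → ℝ}
    (hγ : ∀ i, γ i = (Fintype.card (T.Act i) : ℝ) + ∑ a : T.Act i, T.childSum γ i a)
    (i : T.Info) : 1 ≤ γ i := by
  induction i using T.induction_on_children with
  | h i ih =>
    have hcard : (1 : ℝ) ≤ Fintype.card (T.Act i) := by exact_mod_cast Fintype.card_pos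
    have := Finset.sum_nonneg fun a (_ : a ∈ Finset.univ) =>
      childSum_nonneg fun i' hp => zero_le_one.trans (ih i' a hp)
    linarith [hγ i]

theorem exp_childSum_div_le {w γ opt : T.Info → ℝ} (hw : T.IsWeight w)
    (hγ1 : ∀ i', 1 ≤ γ i')
    (ih : ∀ i', T.parent i' = some ⟨i, a⟩ → opt i' ≤ w i' * Real.log (γ i')) :
    Real.exp (T.childSum opt i a / w i) ≤ 1 + T.childSum γ i a := by
  have hγ0 : ∀ i', 0 ≤ γ i' := fun i' => zero_le_one.trans (hγ1 i')
  have hS : 0 ≤ T.childSum γ i a := childSum_nonneg fun i' _ => hγ0 i'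
  set L := Real.log (1 + T.childSum γ i a)
  have hL : 0 ≤ L := Real.log_nonneg (by linarith)
  have hlog_child : ∀ i', T.parent i' = some ⟨i, a⟩ → Real.log (γ i') ≤ L := fun i' hp =>
    Real.log_le_log (by linarith [hγ1 i'])
      (by linarith [le_childSum (fun j _ => hγ0 j) hp])
  have hwi : 0 < w i := zero_lt_one.trans_le (hw.one_le i)
  have hopt : T.childSum opt i a ≤ w i * L :=
    calc T.childSum opt i a ≤ T.childSum (fun i' => w i' * L) i a :=
          childSum_le_childSum fun i' hp => (ih i' hp).trans <|
            mul_le_mul_of_nonneg_left (hlog_child i' hp) (zero_le_one.trans (hw.one_le i'))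
      _ = T.childSum w i a * L := childSum_mul_const w L
      _ ≤ w i * L := mul_le_mul_of_nonneg_right (by linarith [hw.childSum_le i a]) hL
  calc Real.exp (T.childSum opt i a / w i) ≤ Real.exp L :=
        Real.exp_le_exp.mpr ((div_le_iff₀' hwi).mpr hopt)
    _ = 1 + T.childSum γ i a := Real.exp_log (by linarith)

end Treeplex

/-- With `γ_I = |𝓐(I)| + ∑_a ∑_{p(I')=(I,a)} γ_{I'}` and
`opt_I = w_I ln ∑_a exp((∑_{p(I')=(I,a)} opt_{I'})/w_I)`, one has
`opt_I ≤ w_I ln γ_I` for every information set `I`. -/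
theorem stmt8 (T : Treeplex) (w : T.Info → ℝ) (hw : T.IsWeight w)
    (γ : T.Info → ℝ)
    (hγ : ∀ i : T.Info,
      γ i = (Fintype.card (T.Act i) : ℝ) + ∑ a : T.Act i, T.childSum γ i a)
    (opt : T.Info → ℝ)
    (hopt : ∀ i : T.Info,
      opt i = w i * Real.log (∑ a : T.Act i, Real.exp (T.childSum opt i a / w i))) :
    ∀ i : T.Info, opt i ≤ w i * Real.log (γ i) := by
  intro i
  induction i using T.induction_on_children with
  | h i ih =>
    have hγ1 := Treeplex.one_le_of_eq_card_add_childSum hγ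
    have hsum : ∑ a : T.Act i, Real.exp (T.childSum opt i a / w i) ≤ γ i :=
      calc ∑ a : T.Act i, Real.exp (T.childSum opt i a / w i)
          ≤ ∑ a : T.Act i, (1 + T.childSum γ i a) :=
            Finset.sum_le_sum fun a _ => Treeplex.exp_childSum_div_le hw hγ1 (ih · a)
        _ = γ i := by simp [Finset.sum_add_distrib, hγ i]
    rw [hopt i]
    exact mul_le_mul_of_nonneg_left
      (Real.log_le_log (Finset.sum_pos (fun _ _ => Real.exp_pos _) Finset.univ_nonempty) hsum)
      (zero_le_one.trans (hw.one_le i))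
end

section
/- For w > 0 and ξ ∈ ℝ^n, if opt(ξ) := w ln(∑_j exp(ξ_j/w)) and each ξ_j ≤ w_j ln γ_j with w ≥ 1 + ∑_j w_j (w_j ≥ 0, γ_j ≥ 1), then ∑_j w_j ln γ_j ≤ (1 + ∑_j w_j) ln(1 + ∑_j γ_j). -/
open scoped BigOperators

/-- Superadditivity-type inequality: for nonnegative reals `w_j` and reals
`γ_j ≥ 1`, `∑_j w_j ln γ_j ≤ (1 + ∑_j w_j) ln (1 + ∑_j γ_j)`. -/
theorem stmt12 {n : ℕ} (w γ : Fin n → ℝ) (hw : ∀ j, 0 ≤ w j) (hγ : ∀ j, 1 ≤ γ j) :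
    ∑ j, w j * Real.log (γ j) ≤ (1 + ∑ j, w j) * Real.log (1 + ∑ j, γ j) := by
  have hs : (0:ℝ) ≤ ∑ j, γ j := Finset.sum_nonneg fun j _ => le_trans zero_le_one (hγ j)
  have hlog : 0 ≤ Real.log (1 + ∑ j, γ j) := Real.log_nonneg (by linarith)
  have h1 : ∑ j, w j * Real.log (γ j) ≤ ∑ j, w j * Real.log (1 + ∑ j, γ j) := by
    apply Finset.sum_le_sum
    intro j _
    apply mul_le_mul_of_nonneg_left _ (hw j)
    apply Real.log_le_log (lt_of_lt_of_le zero_lt_one (hγ j))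
    have : γ j ≤ ∑ i, γ i :=
      Finset.single_le_sum (fun i _ => le_trans zero_le_one (hγ i)) (Finset.mem_univ j)
    linarith
  calc ∑ j, w j * Real.log (γ j) ≤ ∑ j, w j * Real.log (1 + ∑ j, γ j) := h1
    _ = (∑ j, w j) * Real.log (1 + ∑ j, γ j) := (Finset.sum_mul ..).symm
    _ ≤ (1 + ∑ j, w j) * Real.log (1 + ∑ j, γ j) := by
        apply mul_le_mul_of_nonneg_right _ hlog; linarith
end

section
/- For the treeplex weights w_I = 1 + max_{a∈𝓐(I)} ∑_{I': p(I')=(I,a)} w_{I'}, the maximum L¹-norm over the strategy set satisfies M_Q := max_{x∈Q} ‖x‖₁ = 1 + ∑_{I: p(I)=∅} w_I. -/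
open scoped BigOperators

namespace Treeplex

lemma key_identity (T : Treeplex) (w : T.Info → ℝ) (x : T.Idx → ℝ) :
    ∑ i : T.Info, ∑ a : T.Act i, x (some ⟨i, a⟩) * T.childSum w i a
      = ∑ i : T.Info, (if T.parent i = none then 0 else x (T.parent i) * w i) := by
  have h1 : ∀ σ : Σ i : T.Info, T.Act i,
      x (some σ) * T.childSum w σ.1 σ.2
        = ∑ i' : T.Info, (if T.parent i' = some σ then x (some σ) * w i' else 0) := by
    intro σ
    rw [childSum, Finset.mul_sum]
    exact Finset.sum_congr rfl fun i' _ => by split <;> simp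
  calc ∑ i : T.Info, ∑ a : T.Act i, x (some ⟨i, a⟩) * T.childSum w i a
      = ∑ σ : Σ i : T.Info, T.Act i, x (some σ) * T.childSum w σ.1 σ.2 := by
        rw [← Finset.univ_sigma_univ, Finset.sum_sigma]
    _ = ∑ σ : Σ i : T.Info, T.Act i,
          ∑ i' : T.Info, (if T.parent i' = some σ then x (some σ) * w i' else 0) :=
        Finset.sum_congr rfl fun σ _ => h1 σ
    _ = ∑ i' : T.Info,
          ∑ σ : Σ i : T.Info, T.Act i, (if T.parent i' = some σ then x (some σ) * w i' else 0) :=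
        Finset.sum_comm
    _ = ∑ i' : T.Info, (if T.parent i' = none then 0 else x (T.parent i') * w i') := by
        refine Finset.sum_congr rfl fun i' _ => ?_
        rcases h : T.parent i' with _ | σ0
        · simp [h]
        · simp only [h, Option.some.injEq, reduceCtorEq, if_false]
          rw [Finset.sum_ite_eq]
          simp

lemma sum_parent_eq (T : Treeplex) (w : T.Info → ℝ) (x : T.Idx → ℝ) (hx1 : x none = 1) :
    ∑ i : T.Info, w i * x (T.parent i)
        - ∑ i : T.Info, ∑ a : T.Act i, x (some ⟨i, a⟩) * T.childSum w i a
      = ∑ i : T.Info, (if T.parent i = none then w i else 0) := by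
  rw [key_identity, ← Finset.sum_sub_distrib]
  refine Finset.sum_congr rfl fun i _ => ?_
  rcases h : T.parent i with _ | σ
  · simp [h, hx1]
  · simp only [h, reduceCtorEq, if_false]
    ring


noncomputable def best (T : Treeplex) (w : T.Info → ℝ) (i : T.Info) : T.Act i :=
  (Finset.exists_mem_eq_sup' Finset.univ_nonempty fun a : T.Act i => T.childSum w i a).choose

lemma best_spec (T : Treeplex) (w : T.Info → ℝ) (i : T.Info) :
    Finset.univ.sup' Finset.univ_nonempty (fun a : T.Act i => T.childSum w i a)
      = T.childSum w i (T.best w i) :=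
  (Finset.exists_mem_eq_sup' Finset.univ_nonempty fun a : T.Act i => T.childSum w i a).choose_spec.2

noncomputable def mass (T : Treeplex) (w : T.Info → ℝ) (i : T.Info) : ℝ :=
  match h : T.parent i with
  | none => 1
  | some ⟨i0, a0⟩ => if a0 = T.best w i0 then T.mass w i0 else 0
termination_by T.depth i
decreasing_by exact T.parent_depth _ _ _ h

noncomputable def xstar (T : Treeplex) (w : T.Info → ℝ) : T.Idx → ℝ
  | none => 1
  | some ⟨i, a⟩ => if a = T.best w i then T.mass w i else 0

theorem mass_nonneg (T : Treeplex) (w : T.Info → ℝ) (i : T.Info) : 0 ≤ T.mass w i := by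
  rw [mass]
  split
  · exact zero_le_one
  · rename_i i0 a0 h
    split
    · exact T.mass_nonneg w i0
    · exact le_refl 0
termination_by T.depth i
decreasing_by exact T.parent_depth _ _ _ (by assumption)

lemma mass_eq (T : Treeplex) (w : T.Info → ℝ) (i : T.Info) :
    T.mass w i = T.xstar w (T.parent i) := by
  rw [mass]
  split <;> rename_i h <;> simp [xstar, h]


lemma xstar_flow (T : Treeplex) (w : T.Info → ℝ) (i : T.Info) :
    ∑ a : T.Act i, T.xstar w (some ⟨i, a⟩) = T.mass w i := by
  show (∑ a : T.Act i, if a = T.best w i then T.mass w i else 0) = T.mass w i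
  rw [Finset.sum_ite_eq' Finset.univ (T.best w i) (fun _ => T.mass w i)]
  simp

lemma xstar_mem (T : Treeplex) (w : T.Info → ℝ) : T.xstar w ∈ T.Q := by
  refine ⟨fun j => ?_, rfl, fun i => ?_⟩
  · rcases j with _ | ⟨i, a⟩
    · exact zero_le_one
    · show 0 ≤ if a = T.best w i then T.mass w i else 0
      split
      · exact T.mass_nonneg w i
      · exact le_refl 0
  · rw [xstar_flow, mass_eq]

lemma xstar_childsum (T : Treeplex) (w : T.Info → ℝ) (hw : T.IsWeight w) (i : T.Info) :
    ∑ a : T.Act i, T.xstar w (some ⟨i, a⟩) * T.childSum w i a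
      = T.mass w i * (w i - 1) := by
  have : ∀ a : T.Act i, T.xstar w (some ⟨i, a⟩) * T.childSum w i a
      = if a = T.best w i then T.mass w i * T.childSum w i a else 0 := by
    intro a
    show (if a = T.best w i then T.mass w i else 0) * T.childSum w i a = _
    split <;> simp
  rw [Finset.sum_congr rfl fun a _ => this a,
    Finset.sum_ite_eq' Finset.univ (T.best w i) (fun a => T.mass w i * T.childSum w i a)]
  have hsup := T.best_spec w i
  have := hw i
  simp only [Finset.mem_univ, if_true]
  rw [← hsup]
  rw [this]
  ring

lemma sum_mass (T : Treeplex) (w : T.Info → ℝ) (hw : T.IsWeight w) :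
    ∑ i : T.Info, T.mass w i = ∑ i : T.Info, (if T.parent i = none then w i else 0) := by
  have h := T.sum_parent_eq w (T.xstar w) rfl
  have h2 : ∑ i : T.Info, ∑ a : T.Act i, T.xstar w (some ⟨i, a⟩) * T.childSum w i a
      = ∑ i : T.Info, T.mass w i * (w i - 1) :=
    Finset.sum_congr rfl fun i _ => T.xstar_childsum w hw i
  have h3 : ∀ i : T.Info, w i * T.xstar w (T.parent i) = T.mass w i * w i := by
    intro i; rw [← mass_eq]; ring
  rw [h2, Finset.sum_congr rfl fun i _ => h3 i] at h
  have h4 : ∑ i : T.Info, T.mass w i * w i - ∑ i : T.Info, T.mass w i * (w i - 1)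
      = ∑ i : T.Info, T.mass w i := by
    rw [← Finset.sum_sub_distrib]
    exact Finset.sum_congr rfl fun i _ => by ring
  linarith [h4, h]

lemma sum_abs_eq (T : Treeplex) (x : T.Idx → ℝ) (hpos : ∀ j, 0 ≤ x j) (h1 : x none = 1) :
    ∑ j : T.Idx, |x j| = 1 + ∑ i : T.Info, ∑ a : T.Act i, x (some ⟨i, a⟩) := by
  have : ∀ j : T.Idx, |x j| = x j := fun j => abs_of_nonneg (hpos j)
  rw [Finset.sum_congr rfl fun j _ => this j, Fintype.sum_option, h1,
    ← Finset.univ_sigma_univ, Finset.sum_sigma]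


end Treeplex

/-- The maximum `L¹`-norm over the strategy set equals `1 + ∑_{I : p(I)=∅} w_I`
for the treeplex weights `w`. -/
theorem stmt17 (T : Treeplex) (w : T.Info → ℝ) (hw : T.IsWeight w) :
    IsGreatest ((fun x => ∑ j, |x j|) '' T.Q)
      (1 + ∑ i : T.Info, if T.parent i = none then w i else 0) := by
  constructor
  · refine ⟨T.xstar w, T.xstar_mem w, ?_⟩
    have hpos : ∀ j, 0 ≤ T.xstar w j := (T.xstar_mem w).1
    show ∑ j : T.Idx, |T.xstar w j| = _
    rw [T.sum_abs_eq (T.xstar w) hpos rfl]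
    rw [Finset.sum_congr rfl fun i _ => T.xstar_flow w i, T.sum_mass w hw]
  · rintro v ⟨x, hx, rfl⟩
    obtain ⟨hpos, h1, hflow⟩ := hx
    simp only
    rw [T.sum_abs_eq x hpos h1]
    have hper : ∀ i : T.Info,
        x (T.parent i) + ∑ a : T.Act i, x (some ⟨i, a⟩) * T.childSum w i a
          ≤ w i * x (T.parent i) := by
      intro i
      set M := Finset.univ.sup' Finset.univ_nonempty (fun a : T.Act i => T.childSum w i a) with hM
      have hle : ∑ a : T.Act i, x (some ⟨i, a⟩) * T.childSum w i a
          ≤ ∑ a : T.Act i, x (some ⟨i, a⟩) * M :=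
        Finset.sum_le_sum fun a _ =>
          mul_le_mul_of_nonneg_left (Finset.le_sup' _ (Finset.mem_univ a)) (hpos _)
      have : ∑ a : T.Act i, x (some ⟨i, a⟩) * M = x (T.parent i) * M := by
        rw [← Finset.sum_mul, ← hflow i]
      have hwi := hw i
      rw [← hM] at hwi
      calc x (T.parent i) + ∑ a : T.Act i, x (some ⟨i, a⟩) * T.childSum w i a
          ≤ x (T.parent i) + x (T.parent i) * M := by linarith [hle, this]
        _ = (1 + M) * x (T.parent i) := by ring
        _ = w i * x (T.parent i) := by rw [hwi]
    have hsum : ∑ i : T.Info, x (T.parent i)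
          + ∑ i : T.Info, ∑ a : T.Act i, x (some ⟨i, a⟩) * T.childSum w i a
        ≤ ∑ i : T.Info, w i * x (T.parent i) := by
      rw [← Finset.sum_add_distrib]
      exact Finset.sum_le_sum fun i _ => hper i
    have hkey := T.sum_parent_eq w x h1
    have hfl : ∑ i : T.Info, ∑ a : T.Act i, x (some ⟨i, a⟩) = ∑ i : T.Info, x (T.parent i) :=
      Finset.sum_congr rfl fun i _ => (hflow i).symm
    rw [hfl]
    linarith
end
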